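/- arXiv:1604.02295 — 2 statements merged into one kernel-verified Lean document; each statement's English description precedes it below -/
import Mathlib

section
/- (Theorem 4(ii), scenario H₃.) Suppose N ≥ 2. Under the perturbation conditions (D₁, E₁, H₃), for every i ∈ {1, …, N−1} the conditional quasi-stationary probability satisfies π̂_i(ε) = ĉ_i[0] + ĉ_i[1] ε + ô_i(ε) for ε ∈ (0, ε₀], where ô_i(ε)/ε → 0 as ε → 0+, ĉ_i[0] = c_i[1]/d[1] > 0 and ĉ_i[1] = ( c_i[2] d[1] − c_i[1] d[2] ) / d[1]², where d[l] = Σ_{j=1}^{N−1} c_j[l] for l = 1, 2 and, for j ∈ {1, …, N−1}, c_j[1] > 0 and c_j[2] are the coefficients in the asymptotic expansion π_j(ε) = c_j[1] ε + c_j[2] ε² + o(ε²) of the stationary probability. -/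
open Filter Finset Topology

noncomputable section

/-- Two-term Laurent asymptotic expansion:
`f ε = c0 * ε^h + c1 * ε^(h+1) + o(ε^(h+1))` as `ε → 0+`. -/
def laurent2 (f : ℝ → ℝ) (h : ℤ) (c0 c1 : ℝ) : Prop :=
  Filter.Tendsto (fun ε : ℝ => (f ε - c0 * ε ^ h - c1 * ε ^ (h + 1)) / ε ^ (h + 1))
    (nhdsWithin 0 (Set.Ioi 0)) (nhds 0)

/-- `Γ_{i,j,σ}(ε) = p_{i,σ}(ε) p_{i+1,σ}(ε) ⋯ p_{j,σ}(ε)`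
(the sign σ is encoded by a `Bool`: `false` = −, `true` = +). -/
def Gam (p : ℕ → Bool → ℝ → ℝ) (σ : Bool) (i j : ℕ) (ε : ℝ) : ℝ :=
  ∏ m ∈ Finset.Icc i j, p m σ ε

/-- `e_i(ε) = e_{i,−}(ε) + e_{i,+}(ε)`. -/
def eT (e : ℕ → Bool → ℝ → ℝ) (i : ℕ) (ε : ℝ) : ℝ := e i false ε + e i true ε

/-- The expected return time
`E_{ii}(ε) = e_i(ε) + ∑_{k<i} e_k(ε) Γ_{k+1,i,−}(ε)/Γ_{k,i−1,+}(ε)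
            + ∑_{i<k≤N} e_k(ε) Γ_{i,k−1,+}(ε)/Γ_{i+1,k,−}(ε)`. -/
def ret (p e : ℕ → Bool → ℝ → ℝ) (N i : ℕ) (ε : ℝ) : ℝ :=
  eT e i ε
    + ∑ k ∈ Finset.range i, eT e k ε * (Gam p false (k + 1) i ε / Gam p true k (i - 1) ε)
    + ∑ k ∈ Finset.Icc (i + 1) N, eT e k ε * (Gam p true i (k - 1) ε / Gam p false (i + 1) k ε)

/-- The stationary probability `π_i(ε) = e_i(ε) / E_{ii}(ε)`. -/
def statPi (p e : ℕ → Bool → ℝ → ℝ) (N i : ℕ) (ε : ℝ) : ℝ := eT e i ε / ret p e N i ε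

/-- `b_i[l] = b_{i,−}[l] + b_{i,+}[l]`. -/
def bT (b : ℕ → Bool → ℕ → ℝ) (i l : ℕ) : ℝ := b i false l + b i true l

/-- The conditional quasi-stationary probability `π̂_i(ε) = π_i(ε) / ∑_{j=1}^{N−1} π_j(ε)`. -/
def qPihat (p e : ℕ → Bool → ℝ → ℝ) (N i : ℕ) (ε : ℝ) : ℝ :=
  statPi p e N i ε / ∑ j ∈ Finset.Icc 1 (N - 1), statPi p e N j ε

/-!
Dividing by `ε` turns `π_j(ε) = c_j[1] ε + c_j[2] ε² + o(ε²)` into the first-order expansion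
`π_j(ε)/ε = c_j[1] + c_j[2] ε + o(ε)`, which says exactly that `π_j(ε)/ε`, redefined as `c_j[1]`
at `0`, has right derivative `c_j[2]` at `0`. Since `π̂_i = (π_i/ε) / ∑_j (π_j/ε)`, the expansion
of `π̂_i` is the quotient rule for derivatives.
-/

namespace laurent2

variable {f g : ℝ → ℝ} {h : ℤ} {c0 c1 : ℝ}

theorem sum {ι : Type*} (s : Finset ι) {f : ι → ℝ → ℝ} {c0 c1 : ι → ℝ}
    (hf : ∀ j ∈ s, laurent2 (f j) h (c0 j) (c1 j)) :
    laurent2 (fun ε => ∑ j ∈ s, f j ε) h (∑ j ∈ s, c0 j) (∑ j ∈ s, c1 j) := by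
  have := tendsto_finsetSum s hf
  rw [Finset.sum_const_zero] at this
  refine this.congr fun ε => ?_
  simp only [← Finset.sum_div, Finset.sum_sub_distrib, Finset.sum_mul]

theorem zero_iff_hasDerivWithinAt :
    laurent2 f 0 c0 c1 ↔ HasDerivWithinAt (Function.update f 0 c0) c1 (Set.Ioi 0) 0 := by
  rw [hasDerivWithinAt_iff_tendsto_slope, Set.sdiff_singleton_eq_self Set.self_notMem_Ioi,
    laurent2, ← tendsto_sub_nhds_zero_iff (x := c1)]
  refine tendsto_congr' (eventually_nhdsWithin_of_forall fun (ε : ℝ) (hε : 0 < ε) => ?_)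
  simp only [zpow_zero, mul_one, zero_add, zpow_one, slope_def_field,
    Function.update_of_ne hε.ne', Function.update_self, sub_zero]
  field_simp

theorem one_iff_zero_div : laurent2 f 1 c0 c1 ↔ laurent2 (fun ε => f ε / ε) 0 c0 c1 := by
  refine tendsto_congr' (eventually_nhdsWithin_of_forall fun (ε : ℝ) (hε : 0 < ε) => ?_)
  norm_num
  field_simp

theorem div_of_order_one {b0 b1 : ℝ} (hf : laurent2 f 1 c0 c1) (hg : laurent2 g 1 b0 b1)
    (hb0 : b0 ≠ 0) :
    laurent2 (fun ε => f ε / g ε) 0 (c0 / b0) ((c1 * b0 - c0 * b1) / b0 ^ 2) := by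
  rw [one_iff_zero_div, zero_iff_hasDerivWithinAt] at hf hg
  have := hf.div hg (by simpa)
  simp only [Function.update_self] at this
  rw [zero_iff_hasDerivWithinAt]
  refine this.congr (fun ε (hε : 0 < ε) => ?_) (by simp)
  simp only [Function.update_of_ne hε.ne', Pi.div_apply]
  field_simp

end laurent2

theorem theorem4_ii_H3_general
    (N : ℕ)
    (p e : ℕ → Bool → ℝ → ℝ)
    (c : ℕ → ℕ → ℝ)
    (hc : ∀ j, 1 ≤ j → j ≤ N - 1 → 0 < c j 1 ∧ laurent2 (statPi p e N j) 1 (c j 1) (c j 2)) :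
    ∀ i, 1 ≤ i → i ≤ N - 1 →
      laurent2 (qPihat p e N i) 0
          (c i 1 / ∑ j ∈ Finset.Icc 1 (N - 1), c j 1)
          ((c i 2 * (∑ j ∈ Finset.Icc 1 (N - 1), c j 1)
              - c i 1 * ∑ j ∈ Finset.Icc 1 (N - 1), c j 2)
            / (∑ j ∈ Finset.Icc 1 (N - 1), c j 1) ^ 2) ∧
        0 < c i 1 / ∑ j ∈ Finset.Icc 1 (N - 1), c j 1 := by
  intro i hi1 hi2
  have hc' (j) (hj : j ∈ Icc 1 (N - 1)) := hc j (mem_Icc.mp hj).1 (mem_Icc.mp hj).2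
  have hd1 : 0 < ∑ j ∈ Icc 1 (N - 1), c j 1 :=
    sum_pos (fun j hj => (hc' j hj).1) ⟨i, mem_Icc.mpr ⟨hi1, hi2⟩⟩
  exact ⟨(hc i hi1 hi2).2.div_of_order_one (laurent2.sum _ fun j hj => (hc' j hj).2) hd1.ne',
    div_pos (hc i hi1 hi2).1 hd1⟩

/-- Theorem 4(ii), scenario H₃ (for `N ≥ 2`): under conditions (D₁, E₁, H₃), if for each
`j ∈ {1,…,N−1}` the numbers `c j 1 > 0` and `c j 2` are the coefficients in the asymptotic
expansion `π_j(ε) = c_j[1] ε + c_j[2] ε² + o(ε²)`, then, with `d[l] = ∑_{j=1}^{N−1} c_j[l]`,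
the conditional quasi-stationary probabilities satisfy
`π̂_i(ε) = ĉ_i[0] + ĉ_i[1] ε + o(ε)` with `ĉ_i[0] = c_i[1]/d[1] > 0` and
`ĉ_i[1] = (c_i[2] d[1] − c_i[1] d[2]) / d[1]²`. -/
theorem theorem4_ii_H3
    (N : ℕ) (hN : 1 ≤ N) (ε₀ : ℝ) (hε₀ : 0 < ε₀) (hε₁ : ε₀ ≤ 1)
    (p e : ℕ → Bool → ℝ → ℝ)
    (hpos : ∀ i ≤ N, ∀ σ : Bool, ∀ ε ∈ Set.Ioc (0 : ℝ) ε₀, 0 < p i σ ε ∧ 0 < e i σ ε)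
    (hone : ∀ i ≤ N, ∀ ε ∈ Set.Ioc (0 : ℝ) ε₀, p i false ε + p i true ε = 1)
    (a b : ℕ → Bool → ℕ → ℝ)
    (hD : ∀ i ≤ N, ∀ σ : Bool, ¬(i = 0 ∧ σ = true) → ¬(i = N ∧ σ = false) →
      0 < a i σ 0 ∧ laurent2 (p i σ) 0 (a i σ 0) (a i σ 1))
    (hD0 : 0 < a 0 true 1 ∧ laurent2 (p 0 true) 1 (a 0 true 1) (a 0 true 2))
    (hDN : 0 < a N false 1 ∧ laurent2 (p N false) 1 (a N false 1) (a N false 2))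
    (hE : ∀ i ≤ N, ∀ σ : Bool, ¬(i = 0 ∧ σ = true) → ¬(i = N ∧ σ = false) →
      0 < b i σ 0 ∧ laurent2 (e i σ) 0 (b i σ 0) (b i σ 1))
    (hE0 : 0 < b 0 true 1 ∧ laurent2 (e 0 true) 1 (b 0 true 1) (b 0 true 2))
    (hEN : 0 < b N false 1 ∧ laurent2 (e N false) 1 (b N false 1) (b N false 2))
    (hNtwo : 2 ≤ N)
    (c : ℕ → ℕ → ℝ)
    (hc : ∀ j, 1 ≤ j → j ≤ N - 1 → 0 < c j 1 ∧ laurent2 (statPi p e N j) 1 (c j 1) (c j 2)) :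
    ∀ i, 1 ≤ i → i ≤ N - 1 →
      laurent2 (qPihat p e N i) 0
          (c i 1 / ∑ j ∈ Finset.Icc 1 (N - 1), c j 1)
          ((c i 2 * (∑ j ∈ Finset.Icc 1 (N - 1), c j 1)
              - c i 1 * ∑ j ∈ Finset.Icc 1 (N - 1), c j 2)
            / (∑ j ∈ Finset.Icc 1 (N - 1), c j 1) ^ 2) ∧
        0 < c i 1 / ∑ j ∈ Finset.Icc 1 (N - 1), c j 1 :=
  theorem4_ii_H3_general N p e c hc
end
end

section
/- (Theorem 5(iii), scenario H₂, order L.) Let L ≥ 1 be an integer and assume the perturbation conditions (D_L, E_L, H₂) hold. Then for every i ∈ {1, …, N} there exist real coefficients c̃_i[0], c̃_i[1], …, c̃_i[L] such that the conditional quasi-stationary probability satisfies π̃_i(ε) = Σ_{l=0}^{L} c̃_i[l] ε^l + õ_i(ε^L) for ε ∈ (0, ε₀], where õ_i(ε^L)/ε^L → 0 as ε → 0+, with c̃_i[0] > 0 for every i ∈ {1, …, N}, Σ_{i=1}^{N} c̃_i[0] = 1, and Σ_{i=1}^{N} c̃_i[l] = 0 for every l = 1, …, L. -/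
/-
Say that `f` has an expansion of order `L` if `f(ε) = q(ε) + o(ε^L)` as `ε → 0+` for a polynomial
`q`. Such expansions are closed under sums and products, and under inversion when `q(0) ≠ 0`:
since `X^(L+1)` and `q` are coprime, `q` has an inverse `r` modulo `X^(L+1)`, and `r` expands
`1/f`. The coefficients of `q` up to degree `L` are determined by `f`.

Under H₂ the probability `p_{0,+}` is of order `ε`, while all other `p_{i,σ}` and all `e_k` are of
order `1`. So in `E_jj` (for `j ≥ 1`) only the term `k = 0`, which carries the factor `1/p_{0,+}`,
is of order `1/ε`: `ε E_jj`, hence `π_j/ε`, has an expansion with positive constant term, and so has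
`π̃_i = (π_i/ε) / ∑_j (π_j/ε)`. Finally `∑_i π̃_i = 1`, and uniqueness of the coefficients gives
`∑_i c̃_i[0] = 1` and `∑_i c̃_i[l] = 0` for `l ≥ 1`.
-/

open Filter Finset Topology

noncomputable section

/-- Taylor asymptotic expansion of order `L`:
`f ε = c 0 + c 1 ε + ⋯ + c L ε^L + o(ε^L)` as `ε → 0+`. -/
def expN (f : ℝ → ℝ) (L : ℕ) (c : ℕ → ℝ) : Prop :=
  Filter.Tendsto (fun ε : ℝ => (f ε - ∑ l ∈ Finset.range (L + 1), c l * ε ^ l) / ε ^ L)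
    (nhdsWithin 0 (Set.Ioi 0)) (nhds 0)

/-- Asymptotic expansion `f ε = c 1 ε + c 2 ε² + ⋯ + c (L+1) ε^(L+1) + o(ε^(L+1))`
as `ε → 0+` (used at the asymptotically absorbing state in scenario H₂). -/
def expN1 (f : ℝ → ℝ) (L : ℕ) (c : ℕ → ℝ) : Prop :=
  Filter.Tendsto
    (fun ε : ℝ => (f ε - ∑ l ∈ Finset.Icc 1 (L + 1), c l * ε ^ l) / ε ^ (L + 1))
    (nhdsWithin 0 (Set.Ioi 0)) (nhds 0)

/-- The conditional quasi-stationary probability `π̃_i(ε) = π_i(ε) / ∑_{j=1}^{N} π_j(ε)`. -/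
def qPi (p e : ℕ → Bool → ℝ → ℝ) (N i : ℕ) (ε : ℝ) : ℝ :=
  statPi p e N i ε / ∑ j ∈ Finset.Icc 1 N, statPi p e N j ε

open Polynomial Asymptotics

def IsPolyExpansion (L : ℕ) (f : ℝ → ℝ) (q : ℝ[X]) : Prop :=
  (fun ε => f ε - q.eval ε) =o[𝓝[>] 0] fun ε => ε ^ L

def HasExpansion (L : ℕ) (f : ℝ → ℝ) (v : ℝ) : Prop :=
  ∃ q : ℝ[X], IsPolyExpansion L f q ∧ q.eval 0 = v

variable {L : ℕ} {f g : ℝ → ℝ} {q r : ℝ[X]}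

lemma eventually_ne_zero_nhdsGT : ∀ᶠ ε in 𝓝[>] (0 : ℝ), ε ≠ 0 :=
  eventually_mem_nhdsWithin.mono fun _ hε => ne_of_gt hε

lemma tendsto_div_pow_iff_isLittleO {n : ℕ} :
    Tendsto (fun ε => f ε / ε ^ n) (𝓝[>] 0) (𝓝 0) ↔ f =o[𝓝[>] 0] fun ε => ε ^ n :=
  (isLittleO_iff_tendsto' (eventually_ne_zero_nhdsGT.mono fun _ hε h =>
    absurd h (pow_ne_zero _ hε))).symm

lemma isLittleO_pow_of_id_mul (h : (fun ε => ε * f ε) =o[𝓝[>] 0] fun ε => ε ^ (L + 1)) :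
    f =o[𝓝[>] 0] fun ε => ε ^ L := by
  refine ((isBigO_refl (fun ε : ℝ => ε⁻¹) _).mul_isLittleO h).congr' ?_ ?_ <;>
    filter_upwards [eventually_ne_zero_nhdsGT] with ε hε <;> field_simp
  ring

lemma tendsto_zero_of_isLittleO_pow (h : f =o[𝓝[>] 0] fun ε => ε ^ L) :
    Tendsto f (𝓝[>] 0) (𝓝 0) := by
  refine (isLittleO_one_iff ℝ).1 (h.trans_isBigO (Tendsto.isBigO_one ℝ (c := (0 : ℝ) ^ L) ?_))
  exact ((continuous_pow L).tendsto 0).mono_left nhdsWithin_le_nhds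

lemma isLittleO_eval_X_pow_mul (s : ℝ[X]) :
    (fun ε => (X ^ (L + 1) * s).eval ε) =o[𝓝[>] 0] fun ε => ε ^ L := by
  have hs : Tendsto (fun ε => ε * s.eval ε) (𝓝[>] 0) (𝓝 0) := by
    have hc : Continuous fun ε => ε * s.eval ε := continuous_id.mul s.continuous
    simpa using (hc.tendsto 0).mono_left nhdsWithin_le_nhds
  simpa [pow_succ, mul_assoc] using
    (isBigO_refl (fun ε : ℝ => ε ^ L) _).mul_isLittleO ((isLittleO_one_iff ℝ).2 hs)

lemma coeff_zero_eq_zero_of_isLittleO (h : (fun ε => q.eval ε) =o[𝓝[>] 0] fun ε => ε ^ L) :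
    q.coeff 0 = 0 := by
  rw [coeff_zero_eq_eval_zero]
  exact tendsto_nhds_unique ((q.continuous.tendsto 0).mono_left nhdsWithin_le_nhds)
    (tendsto_zero_of_isLittleO_pow h)

lemma coeff_eq_zero_of_isLittleO (h : (fun ε => q.eval ε) =o[𝓝[>] 0] fun ε => ε ^ L) :
    ∀ l ≤ L, q.coeff l = 0 := by
  induction L generalizing q with
  | zero =>
    intro l hl
    rw [Nat.le_zero.1 hl]
    exact coeff_zero_eq_zero_of_isLittleO h
  | succ L ih =>
    have hcoeff0 := coeff_zero_eq_zero_of_isLittleO h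
    have hdivX : (fun ε => (divX q).eval ε) =o[𝓝[>] 0] fun ε => ε ^ L := by
      refine isLittleO_pow_of_id_mul (h.congr_left fun ε => ?_)
      conv_lhs => rw [← divX_mul_X_add q, hcoeff0]
      simp [mul_comm]
    rintro (_ | l) hl
    · exact hcoeff0
    · rw [← coeff_divX]
      exact ih hdivX l (by omega)

lemma isPolyExpansion_eval (q : ℝ[X]) : IsPolyExpansion L (fun ε => q.eval ε) q := by
  simp [IsPolyExpansion]

namespace IsPolyExpansion

lemma congr (hfg : f =ᶠ[𝓝[>] 0] g) (h : IsPolyExpansion L f q) : IsPolyExpansion L g q :=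
  h.congr' (hfg.mono fun ε hε => by simp only [hε]) EventuallyEq.rfl

lemma tendsto (h : IsPolyExpansion L f q) : Tendsto f (𝓝[>] 0) (𝓝 (q.eval 0)) := by
  have hq : Tendsto (fun ε => q.eval ε) (𝓝[>] 0) (𝓝 (q.eval 0)) :=
    (q.continuous.tendsto 0).mono_left nhdsWithin_le_nhds
  simpa using (tendsto_zero_of_isLittleO_pow h).add hq

lemma add (hf : IsPolyExpansion L f q) (hg : IsPolyExpansion L g r) :
    IsPolyExpansion L (fun ε => f ε + g ε) (q + r) :=
  (IsLittleO.add hf hg).congr_left fun ε => by simp only [eval_add]; ring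

lemma add_X_pow_mul (h : IsPolyExpansion L f q) (s : ℝ[X]) :
    IsPolyExpansion L f (q + X ^ (L + 1) * s) :=
  (IsLittleO.sub h (isLittleO_eval_X_pow_mul s)).congr_left fun ε => by simp only [eval_add]; ring

lemma mul (hf : IsPolyExpansion L f q) (hg : IsPolyExpansion L g r) :
    IsPolyExpansion L (fun ε => f ε * g ε) (q * r) := by
  have h1 := IsLittleO.mul_isBigO hf (hg.tendsto.isBigO_one ℝ)
  have h2 := (((q.continuous.tendsto 0).mono_left nhdsWithin_le_nhds).isBigO_one ℝ).mul_isLittleO hg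
  refine ((h1.add (h2.congr_right fun ε => mul_comm _ _)).congr_left fun ε => ?_).congr_right
    fun ε => mul_one _
  simp only [eval_mul]
  ring

lemma inv (h : IsPolyExpansion L f q) (hq : q.eval 0 ≠ 0) :
    ∃ r : ℝ[X], IsPolyExpansion L (fun ε => (f ε)⁻¹) r ∧ r.eval 0 = (q.eval 0)⁻¹ := by
  have hcop : IsCoprime (X ^ (L + 1)) q :=
    ((irreducible_X.coprime_iff_not_dvd).2 (by rwa [X_dvd_iff, coeff_zero_eq_eval_zero])).pow_left
  obtain ⟨s, r, hsr⟩ := hcop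
  have hr0 : r.eval 0 * q.eval 0 = 1 := by simpa using congrArg (Polynomial.eval 0) hsr
  refine ⟨r, ?_, eq_inv_of_mul_eq_one_left hr0⟩
  have hfr : IsPolyExpansion L (fun ε => f ε * r.eval ε) 1 := by
    have := (h.mul (isPolyExpansion_eval r)).add_X_pow_mul s
    rwa [mul_comm q, mul_comm (X ^ _), add_comm, hsr] at this
  have hfr' : (fun ε => f ε * r.eval ε - 1) =o[𝓝[>] 0] fun ε => ε ^ L := by
    simpa [IsPolyExpansion] using hfr
  refine (((h.tendsto.inv₀ hq).isBigO_one ℝ).mul_isLittleO hfr').neg_left.congr' ?_ (by simp)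
  filter_upwards [h.tendsto.eventually_ne hq] with ε hε
  field_simp
  ring

lemma coeff_eq (hq : IsPolyExpansion L f q) (hr : IsPolyExpansion L f r) :
    ∀ l ≤ L, q.coeff l = r.coeff l := by
  intro l hl
  have := coeff_eq_zero_of_isLittleO (q := r - q) ((IsLittleO.sub hq hr).congr_left fun ε => by
    simp only [eval_sub]; ring) l hl
  rwa [coeff_sub, sub_eq_zero, eq_comm] at this

variable {ι : Type*} {s : Finset ι} {F : ι → ℝ → ℝ} {Q : ι → ℝ[X]}

lemma sum (h : ∀ i ∈ s, IsPolyExpansion L (F i) (Q i)) :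
    IsPolyExpansion L (fun ε => ∑ i ∈ s, F i ε) (∑ i ∈ s, Q i) := by
  classical
  induction s using Finset.induction_on with
  | empty => simpa using isPolyExpansion_eval (L := L) 0
  | insert i s hi ih =>
    simp only [Finset.sum_insert hi]
    exact (h i (mem_insert_self i s)).add (ih fun j hj => h j (mem_insert_of_mem hj))

lemma prod (h : ∀ i ∈ s, IsPolyExpansion L (F i) (Q i)) :
    IsPolyExpansion L (fun ε => ∏ i ∈ s, F i ε) (∏ i ∈ s, Q i) := by
  classical
  induction s using Finset.induction_on with
  | empty => simpa using isPolyExpansion_eval (L := L) 1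
  | insert i s hi ih =>
    simp only [Finset.prod_insert hi]
    exact (h i (mem_insert_self i s)).mul (ih fun j hj => h j (mem_insert_of_mem hj))

end IsPolyExpansion

lemma expN_iff_isPolyExpansion {c : ℕ → ℝ} :
    expN f L c ↔ IsPolyExpansion L f (∑ l ∈ range (L + 1), C (c l) * X ^ l) := by
  simp [expN, IsPolyExpansion, tendsto_div_pow_iff_isLittleO, eval_finsetSum]

lemma IsPolyExpansion.expN_coeff (h : IsPolyExpansion L f q) : expN f L q.coeff := by
  obtain ⟨s, hs⟩ : X ^ (L + 1) ∣ q - ∑ l ∈ range (L + 1), C (q.coeff l) * X ^ l := by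
    refine X_pow_dvd_iff.2 fun d hd => ?_
    simp [hd]
  rw [expN_iff_isPolyExpansion]
  convert h.add_X_pow_mul (-s) using 1
  rw [mul_neg, ← hs]
  ring

lemma expN1.isPolyExpansion_div_id {c : ℕ → ℝ} (h : expN1 f L c) :
    IsPolyExpansion L (fun ε => f ε / ε) (∑ l ∈ range (L + 1), C (c (l + 1)) * X ^ l) := by
  rw [expN1, tendsto_div_pow_iff_isLittleO] at h
  refine isLittleO_pow_of_id_mul (h.congr' ?_ EventuallyEq.rfl)
  filter_upwards [eventually_ne_zero_nhdsGT] with ε hε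
  rw [← Ico_add_one_right_eq_Icc, ← sum_Ico_add' _ 0 (L + 1) 1, ← range_eq_Ico]
  simp only [eval_finsetSum, eval_mul, eval_C, eval_pow, eval_X, mul_sub, mul_div_cancel₀ _ hε,
    Finset.mul_sum, pow_succ]
  exact congrArg _ (Finset.sum_congr rfl fun l _ => by ring)

namespace HasExpansion

variable {v w : ℝ}

lemma congr (hfg : f =ᶠ[𝓝[>] 0] g) (h : HasExpansion L f v) : HasExpansion L g v :=
  let ⟨q, hq, hq0⟩ := h; ⟨q, hq.congr hfg, hq0⟩

lemma eventually_ne (h : HasExpansion L f v) (hv : v ≠ 0) : ∀ᶠ ε in 𝓝[>] 0, f ε ≠ 0 :=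
  let ⟨_, hq, hq0⟩ := h; hq.tendsto.eventually_ne (hq0 ▸ hv)

lemma add (hf : HasExpansion L f v) (hg : HasExpansion L g w) :
    HasExpansion L (fun ε => f ε + g ε) (v + w) :=
  let ⟨q, hq, hq0⟩ := hf; let ⟨r, hr, hr0⟩ := hg; ⟨q + r, hq.add hr, by simp [hq0, hr0]⟩

lemma mul (hf : HasExpansion L f v) (hg : HasExpansion L g w) :
    HasExpansion L (fun ε => f ε * g ε) (v * w) :=
  let ⟨q, hq, hq0⟩ := hf; let ⟨r, hr, hr0⟩ := hg; ⟨q * r, hq.mul hr, by simp [hq0, hr0]⟩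

lemma id_mul (h : HasExpansion L f v) : HasExpansion L (fun ε => ε * f ε) 0 := by
  have hX : HasExpansion L (fun ε => ε) 0 := ⟨X, by simpa using isPolyExpansion_eval X, eval_X⟩
  simpa using hX.mul h

lemma inv (h : HasExpansion L f v) (hv : v ≠ 0) : HasExpansion L (fun ε => (f ε)⁻¹) v⁻¹ := by
  obtain ⟨q, hq, rfl⟩ := h
  exact hq.inv hv

lemma div (hf : HasExpansion L f v) (hg : HasExpansion L g w) (hw : w ≠ 0) :
    HasExpansion L (fun ε => f ε / g ε) (v / w) := by
  simpa [div_eq_mul_inv] using hf.mul (hg.inv hw)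

variable {ι : Type*} {s : Finset ι} {F : ι → ℝ → ℝ} {V : ι → ℝ}

lemma sum (h : ∀ i ∈ s, HasExpansion L (F i) (V i)) :
    HasExpansion L (fun ε => ∑ i ∈ s, F i ε) (∑ i ∈ s, V i) := by
  choose! Q hQ hQ0 using h
  exact ⟨∑ i ∈ s, Q i, IsPolyExpansion.sum hQ, by simp [eval_finsetSum, Finset.sum_congr rfl hQ0]⟩

lemma prod (h : ∀ i ∈ s, HasExpansion L (F i) (V i)) :
    HasExpansion L (fun ε => ∏ i ∈ s, F i ε) (∏ i ∈ s, V i) := by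
  choose! Q hQ hQ0 using h
  exact ⟨∏ i ∈ s, Q i, IsPolyExpansion.prod hQ, by simp [eval_prod, Finset.prod_congr rfl hQ0]⟩

end HasExpansion

lemma expN.hasExpansion {c : ℕ → ℝ} (h : expN f L c) : HasExpansion L f (c 0) :=
  ⟨_, expN_iff_isPolyExpansion.1 h, by simp [eval_finsetSum, Finset.sum_range_succ']⟩

lemma expN1.hasExpansion_div_id {c : ℕ → ℝ} (h : expN1 f L c) :
    HasExpansion L (fun ε => f ε / ε) (c 1) :=
  ⟨_, h.isPolyExpansion_div_id, by simp [eval_finsetSum, Finset.sum_range_succ']⟩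

def HasPosExpansion (L : ℕ) (f : ℝ → ℝ) : Prop := ∃ v > 0, HasExpansion L f v

namespace HasPosExpansion

lemma mul (hf : HasPosExpansion L f) (hg : HasPosExpansion L g) :
    HasPosExpansion L (fun ε => f ε * g ε) :=
  let ⟨_, hv, hf⟩ := hf; let ⟨_, hw, hg⟩ := hg; ⟨_, mul_pos hv hw, hf.mul hg⟩

lemma div (hf : HasPosExpansion L f) (hg : HasPosExpansion L g) :
    HasPosExpansion L (fun ε => f ε / g ε) :=
  let ⟨_, hv, hf⟩ := hf; let ⟨_, hw, hg⟩ := hg; ⟨_, div_pos hv hw, hf.div hg hw.ne'⟩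

lemma congr (hfg : f =ᶠ[𝓝[>] 0] g) (h : HasPosExpansion L f) : HasPosExpansion L g :=
  let ⟨_, hv, h⟩ := h; ⟨_, hv, h.congr hfg⟩

lemma eventually_ne (h : HasPosExpansion L f) : ∀ᶠ ε in 𝓝[>] 0, f ε ≠ 0 :=
  let ⟨_, hv, h⟩ := h; h.eventually_ne hv.ne'

variable {ι : Type*} {s : Finset ι} {F : ι → ℝ → ℝ}

lemma sum (hs : s.Nonempty) (h : ∀ i ∈ s, HasPosExpansion L (F i)) :
    HasPosExpansion L (fun ε => ∑ i ∈ s, F i ε) := by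
  choose! V hV hF using h
  exact ⟨_, sum_pos hV hs, HasExpansion.sum hF⟩

lemma prod (h : ∀ i ∈ s, HasPosExpansion L (F i)) :
    HasPosExpansion L (fun ε => ∏ i ∈ s, F i ε) := by
  choose! V hV hF using h
  exact ⟨_, prod_pos hV, HasExpansion.prod hF⟩

end HasPosExpansion

lemma exists_expN_of_sum_eq_one {ι : Type*} {s : Finset ι} {F : ι → ℝ → ℝ}
    (hF : ∀ i ∈ s, HasPosExpansion L (F i)) (hsum : ∀ᶠ ε in 𝓝[>] 0, ∑ i ∈ s, F i ε = 1) :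
    ∃ c : ι → ℕ → ℝ, (∀ i ∈ s, expN (F i) L (c i) ∧ 0 < c i 0) ∧
      ∑ i ∈ s, c i 0 = 1 ∧ ∀ l, 1 ≤ l → l ≤ L → ∑ i ∈ s, c i l = 0 := by
  choose! v hv Q hQ hQv using hF
  have hcoeff : ∀ l ≤ L, ∑ i ∈ s, (Q i).coeff l = (C 1 : ℝ[X]).coeff l := by
    intro l hl
    rw [← finsetSum_coeff]
    exact (IsPolyExpansion.sum hQ).coeff_eq
      ((isPolyExpansion_eval (C 1)).congr (hsum.mono fun ε h => by simp [h])) l hl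
  refine ⟨fun i => (Q i).coeff, fun i hi => ⟨(hQ i hi).expN_coeff, ?_⟩, ?_, fun l hl1 hl2 => ?_⟩
  · simpa [coeff_zero_eq_eval_zero, hQv i hi] using hv i hi
  · simpa using hcoeff 0 (Nat.zero_le L)
  · simpa [coeff_one, show l ≠ 0 by omega] using hcoeff l hl2

section BirthDeath

variable {N : ℕ} {p e : ℕ → Bool → ℝ → ℝ}

lemma Gam_eq_mul_Gam_succ {σ : Bool} {i j : ℕ} (hij : i ≤ j) (ε : ℝ) :
    Gam p σ i j ε = p i σ ε * Gam p σ (i + 1) j ε := by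
  rw [Gam, Gam, ← mul_prod_Ioc_eq_prod_Icc hij, Icc_add_one_left_eq_Ioc]

lemma hasPosExpansion_eT_of_expN {b : ℕ → Bool → ℕ → ℝ}
    (hE : ∀ i ≤ N, ∀ σ : Bool, ¬(i = 0 ∧ σ = true) → 0 < b i σ 0 ∧ expN (e i σ) L (b i σ))
    (hE0 : expN1 (e 0 true) L (b 0 true)) {k : ℕ} (hk : k ≤ N) :
    HasPosExpansion L (eT e k) := by
  have hfalse := hE k hk false (by simp)
  rcases Nat.eq_zero_or_pos k with rfl | hk0
  · have htrue : HasExpansion L (e 0 true) 0 := hE0.hasExpansion_div_id.id_mul.congr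
      (eventually_ne_zero_nhdsGT.mono fun ε hε => mul_div_cancel₀ _ hε)
    exact ⟨_, by simpa using hfalse.1, hfalse.2.hasExpansion.add htrue⟩
  · have htrue := hE k hk true (by omega)
    exact ⟨_, add_pos hfalse.1 htrue.1, hfalse.2.hasExpansion.add htrue.2.hasExpansion⟩

/-- The form in which (D_L, E_L, H₂) enter the proof. -/
structure PerturbationH2 (N L : ℕ) (p e : ℕ → Bool → ℝ → ℝ) : Prop where
  hasPosExpansion_p : ∀ m ≤ N, ∀ σ : Bool, ¬(m = 0 ∧ σ = true) → HasPosExpansion L (p m σ)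
  hasPosExpansion_p_zero_div : HasPosExpansion L (fun ε => p 0 true ε / ε)
  hasPosExpansion_eT : ∀ k ≤ N, HasPosExpansion L (eT e k)

namespace PerturbationH2

lemma hasPosExpansion_Gam (h : PerturbationH2 N L p e) {σ : Bool} {i j : ℕ}
    (hi : ¬(i = 0 ∧ σ = true)) (hj : j ≤ N) :
    HasPosExpansion L (Gam p σ i j) :=
  HasPosExpansion.prod fun m hm => h.hasPosExpansion_p m ((mem_Icc.1 hm).2.trans hj) σ
    fun hmσ => hi ⟨by have := (mem_Icc.1 hm).1; omega, hmσ.2⟩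

lemma hasPosExpansion_id_mul_ret (h : PerturbationH2 N L p e) {j : ℕ} (hj : 1 ≤ j)
    (hjN : j ≤ N) :
    HasPosExpansion L (fun ε => ε * ret p e N j ε) := by
  obtain ⟨j, rfl⟩ : ∃ j', j = j' + 1 := ⟨j - 1, by omega⟩
  obtain ⟨V, hV, hlead⟩ : HasPosExpansion L fun ε =>
      eT e 0 ε * Gam p false 1 (j + 1) ε / (p 0 true ε / ε * Gam p true 1 j ε) :=
    ((h.hasPosExpansion_eT 0 N.zero_le).mul
        (h.hasPosExpansion_Gam (σ := false) (by simp) hjN)).div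
      (h.hasPosExpansion_p_zero_div.mul
        (h.hasPosExpansion_Gam (σ := true) (i := 1) (j := j) (by simp) (by omega)))
  have hlow : ∀ k ∈ range j, ∃ v, HasExpansion L (fun ε =>
      eT e (k + 1) ε * (Gam p false (k + 1 + 1) (j + 1) ε / Gam p true (k + 1) j ε)) v := by
    intro k hk
    obtain ⟨v, -, hv⟩ := (h.hasPosExpansion_eT (k + 1) (by simp at hk; omega)).mul
      ((h.hasPosExpansion_Gam (σ := false) (i := k + 1 + 1) (by simp) hjN).div
        (h.hasPosExpansion_Gam (σ := true) (i := k + 1) (j := j) (by simp) (by omega)))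
    exact ⟨v, hv⟩
  have hhigh : ∀ k ∈ Icc (j + 1 + 1) N, ∃ v, HasExpansion L (fun ε =>
      eT e k ε * (Gam p true (j + 1) (k - 1) ε / Gam p false (j + 1 + 1) k ε)) v := by
    intro k hk
    have hkN := (mem_Icc.1 hk).2
    obtain ⟨v, -, hv⟩ := (h.hasPosExpansion_eT k hkN).mul
      ((h.hasPosExpansion_Gam (σ := true) (i := j + 1) (j := k - 1) (by simp) (by omega)).div
        (h.hasPosExpansion_Gam (σ := false) (i := j + 1 + 1) (by simp) hkN))
    exact ⟨v, hv⟩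
  choose! vlow hvlow using hlow
  choose! vhigh hvhigh using hhigh
  obtain ⟨w, -, hej⟩ := h.hasPosExpansion_eT (j + 1) hjN
  have hsplit :=
    hlead.add ((hej.add (HasExpansion.sum hvlow)).add (HasExpansion.sum hvhigh)).id_mul
  rw [add_zero] at hsplit
  refine ⟨V, hV, hsplit.congr (Eventually.of_forall fun ε => ?_)⟩
  simp only [ret, sum_range_succ', Gam_eq_mul_Gam_succ (Nat.zero_le j), Nat.add_sub_cancel,
    div_mul_eq_mul_div, div_div_eq_mul_div]
  ring

lemma hasPosExpansion_statPi_div_id (h : PerturbationH2 N L p e) {j : ℕ} (hj : 1 ≤ j)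
    (hjN : j ≤ N) : HasPosExpansion L (fun ε => statPi p e N j ε / ε) :=
  ((h.hasPosExpansion_eT j hjN).div (h.hasPosExpansion_id_mul_ret hj hjN)).congr
    (Eventually.of_forall fun ε => by dsimp only; rw [statPi, div_div, mul_comm])

lemma hasPosExpansion_sum_statPi_div_id (h : PerturbationH2 N L p e) (hN : 1 ≤ N) :
    HasPosExpansion L (fun ε => ∑ j ∈ Icc 1 N, statPi p e N j ε / ε) :=
  HasPosExpansion.sum ⟨1, mem_Icc.2 ⟨le_rfl, hN⟩⟩ fun _ hj =>
    h.hasPosExpansion_statPi_div_id (mem_Icc.1 hj).1 (mem_Icc.1 hj).2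

lemma hasPosExpansion_qPi (h : PerturbationH2 N L p e) {i : ℕ} (hi : i ∈ Icc 1 N) :
    HasPosExpansion L (qPi p e N i) :=
  ((h.hasPosExpansion_statPi_div_id (mem_Icc.1 hi).1 (mem_Icc.1 hi).2).div
    (h.hasPosExpansion_sum_statPi_div_id ((mem_Icc.1 hi).1.trans (mem_Icc.1 hi).2))).congr
    (eventually_ne_zero_nhdsGT.mono fun ε hε => by
      rw [← sum_div, div_div_div_cancel_right₀ hε, qPi])

lemma sum_qPi_eventually_eq_one (h : PerturbationH2 N L p e) (hN : 1 ≤ N) :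
    ∀ᶠ ε in 𝓝[>] 0, ∑ i ∈ Icc 1 N, qPi p e N i ε = 1 := by
  filter_upwards [(h.hasPosExpansion_sum_statPi_div_id hN).eventually_ne] with ε hε
  rw [← sum_div, div_ne_zero_iff] at hε
  simp only [qPi, ← sum_div, div_self hε.1]

end PerturbationH2

end BirthDeath

theorem theorem5_iii_H2_general
    (N : ℕ) (hN : 1 ≤ N)
    (L : ℕ)
    (p e : ℕ → Bool → ℝ → ℝ)
    (a b : ℕ → Bool → ℕ → ℝ)
    (hD : ∀ i ≤ N, ∀ σ : Bool, ¬(i = 0 ∧ σ = true) →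
      0 < a i σ 0 ∧ expN (p i σ) L (a i σ))
    (hD0 : 0 < a 0 true 1 ∧ expN1 (p 0 true) L (a 0 true))
    (hE : ∀ i ≤ N, ∀ σ : Bool, ¬(i = 0 ∧ σ = true) →
      0 < b i σ 0 ∧ expN (e i σ) L (b i σ))
    (hE0 : 0 < b 0 true 1 ∧ expN1 (e 0 true) L (b 0 true)) :
    ∃ ct : ℕ → ℕ → ℝ,
      (∀ i, 1 ≤ i → i ≤ N → expN (qPi p e N i) L (ct i) ∧ 0 < ct i 0) ∧
      (∑ i ∈ Finset.Icc 1 N, ct i 0 = 1) ∧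
      (∀ l, 1 ≤ l → l ≤ L → ∑ i ∈ Finset.Icc 1 N, ct i l = 0) := by
  have h : PerturbationH2 N L p e :=
    { hasPosExpansion_p := fun m hm σ hmσ =>
        ⟨_, (hD m hm σ hmσ).1, (hD m hm σ hmσ).2.hasExpansion⟩
      hasPosExpansion_p_zero_div := ⟨_, hD0.1, hD0.2.hasExpansion_div_id⟩
      hasPosExpansion_eT := fun _ hk => hasPosExpansion_eT_of_expN hE hE0.2 hk }
  obtain ⟨ct, hct, hsum0, hsum⟩ :=
    exists_expN_of_sum_eq_one (fun _ hi => h.hasPosExpansion_qPi hi)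
      (h.sum_qPi_eventually_eq_one hN)
  exact ⟨ct, fun i hi hiN => hct i (mem_Icc.2 ⟨hi, hiN⟩), hsum0, hsum⟩

/-- Theorem 5(iii), scenario H₂, order `L`: under conditions (D_L, E_L, H₂), each
conditional quasi-stationary probability admits an asymptotic expansion
`π̃_i(ε) = ∑_{l=0}^{L} c̃_i[l] ε^l + o(ε^L)` with `c̃_i[0] > 0`,
`∑_{i=1}^{N} c̃_i[0] = 1` and `∑_{i=1}^{N} c̃_i[l] = 0` for `1 ≤ l ≤ L`. -/
theorem theorem5_iii_H2
    (N : ℕ) (hN : 1 ≤ N) (ε₀ : ℝ) (hε₀ : 0 < ε₀) (hε₁ : ε₀ ≤ 1)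
    (L : ℕ) (hL : 1 ≤ L)
    (p e : ℕ → Bool → ℝ → ℝ)
    (hpos : ∀ i ≤ N, ∀ σ : Bool, ∀ ε ∈ Set.Ioc (0 : ℝ) ε₀, 0 < p i σ ε ∧ 0 < e i σ ε)
    (hone : ∀ i ≤ N, ∀ ε ∈ Set.Ioc (0 : ℝ) ε₀, p i false ε + p i true ε = 1)
    (a b : ℕ → Bool → ℕ → ℝ)
    (hD : ∀ i ≤ N, ∀ σ : Bool, ¬(i = 0 ∧ σ = true) →
      0 < a i σ 0 ∧ expN (p i σ) L (a i σ))
    (hD0 : 0 < a 0 true 1 ∧ expN1 (p 0 true) L (a 0 true))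
    (hE : ∀ i ≤ N, ∀ σ : Bool, ¬(i = 0 ∧ σ = true) →
      0 < b i σ 0 ∧ expN (e i σ) L (b i σ))
    (hE0 : 0 < b 0 true 1 ∧ expN1 (e 0 true) L (b 0 true)) :
    ∃ ct : ℕ → ℕ → ℝ,
      (∀ i, 1 ≤ i → i ≤ N → expN (qPi p e N i) L (ct i) ∧ 0 < ct i 0) ∧
      (∑ i ∈ Finset.Icc 1 N, ct i 0 = 1) ∧
      (∀ l, 1 ≤ l → l ≤ L → ∑ i ∈ Finset.Icc 1 N, ct i l = 0) :=
  theorem5_iii_H2_general N hN L p e a b hD hD0 hE hE0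
end
end
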